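/- If a candidate follower e of an anchor x has fewer than t(e)-1 effective triangles (triangles whose other two edges are each either not yet eliminated and ordered after e, or already verified as survivors), then e cannot be a true follower of x, i.e., t^{x}(e) = t(e). -/

import Mathlib

variable {V : Type*}

/-- Support of an (unordered) edge in graph `H`: number of common neighbors. -/
noncomputable def esupp [Fintype V] (H : SimpleGraph V) : Sym2 V → ℕ :=
  Sym2.lift ⟨fun u v => Nat.card {w : V // H.Adj u w ∧ H.Adj v w},
    fun _ _ => Nat.card_congr (Equiv.subtypeEquivRight fun _ => and_comm)⟩

/-- `H` is a subgraph of `G` in which every edge has support at least `k-2`. -/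
def IsTrussSub [Fintype V] (G H : SimpleGraph V) (k : ℕ) : Prop :=
  H ≤ G ∧ ∀ e ∈ H.edgeSet, k - 2 ≤ esupp H e

/-- Trussness of an edge: the largest `k` such that some subgraph witnessing
the `k`-truss support condition contains it. -/
noncomputable def etruss [Fintype V] (G : SimpleGraph V) (e : Sym2 V) : ℕ :=
  sSup {k | ∃ H, IsTrussSub G H k ∧ e ∈ H.edgeSet}

/-- The `k`-truss of `G`: the maximal subgraph in which every edge has support `≥ k-2`. -/
noncomputable def trussG [Fintype V] (G : SimpleGraph V) (k : ℕ) : SimpleGraph V :=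
  sSup {H | IsTrussSub G H k}

/-- Anchored truss-subgraph: edges in the anchor set `A` are exempt from the
support constraint. -/
def IsATrussSub [Fintype V] (G H : SimpleGraph V) (A : Set (Sym2 V)) (k : ℕ) : Prop :=
  H ≤ G ∧ ∀ e ∈ H.edgeSet, e ∈ A ∨ k - 2 ≤ esupp H e

/-- Anchored trussness `t^A(e)`. -/
noncomputable def atruss [Fintype V] (G : SimpleGraph V) (A : Set (Sym2 V)) (e : Sym2 V) : ℕ :=
  sSup {k | ∃ H, IsATrussSub G H A k ∧ e ∈ H.edgeSet}

/-- The anchored `k`-truss of `G` with anchor set `A`. -/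
noncomputable def atrussGraph [Fintype V] (G : SimpleGraph V) (A : Set (Sym2 V)) (k : ℕ) :
    SimpleGraph V :=
  sSup {H | IsATrussSub G H A k}

/-- Trussness gain: total increment of trussness over all non-anchor edges. -/
noncomputable def TG [Fintype V] (G : SimpleGraph V) (A : Set (Sym2 V)) : ℕ :=
  ∑ e ∈ (G.edgeSet \ A).toFinite.toFinset, (atruss G A e - etruss G e)

/-- `a b c` form a triangle in `G`. -/
def IsTri (G : SimpleGraph V) (a b c : V) : Prop := G.Adj a b ∧ G.Adj b c ∧ G.Adj a c

/-- The three edges of the triangle on `a b c`. -/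
def triE (a b c : V) : Set (Sym2 V) := {s(a, b), s(b, c), s(a, c)}

/-- Two edges lie in a common triangle of `G`. -/
def ShareTri (G : SimpleGraph V) (e f : Sym2 V) : Prop :=
  ∃ a b c, IsTri G a b c ∧ e ∈ triE a b c ∧ f ∈ triE a b c

/-- Triangle connectivity: chain of triangles, consecutive ones sharing an edge. -/
def TriConn (G : SimpleGraph V) : Sym2 V → Sym2 V → Prop := Relation.TransGen (ShareTri G)

/-- A `k`-truss component: a truss-subgraph whose edges are pairwise
triangle-connected within it, maximal with these properties. -/
def IsTrussComponent [Fintype V] (G S : SimpleGraph V) (k : ℕ) : Prop :=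
  IsTrussSub G S k ∧
  (∀ e ∈ S.edgeSet, ∀ f ∈ S.edgeSet, e = f ∨ TriConn S e f) ∧
  ∀ S', IsTrussSub G S' k →
    (∀ e ∈ S'.edgeSet, ∀ f ∈ S'.edgeSet, e = f ∨ TriConn S' e f) → S ≤ S' → S' = S

section
variable [Fintype V]

lemma esupp_mono {H H' : SimpleGraph V} (h : H ≤ H') (e : Sym2 V) :
    esupp H e ≤ esupp H' e := by
  induction e using Sym2.inductionOn with
  | hf u v =>
    show Nat.card {w // H.Adj u w ∧ H.Adj v w} ≤ Nat.card {w // H'.Adj u w ∧ H'.Adj v w}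
    exact Nat.card_le_card_of_injective (fun w => ⟨w.1, h w.2.1, h w.2.2⟩)
      fun _ _ hab => Subtype.ext (Subtype.mk.inj hab)

lemma esupp_le_card (H : SimpleGraph V) (e : Sym2 V) : esupp H e ≤ Fintype.card V := by
  induction e using Sym2.inductionOn with
  | hf u v =>
    rw [← Nat.card_eq_fintype_card]
    exact Nat.card_le_card_of_injective Subtype.val Subtype.val_injective

lemma IsTrussSub.isATrussSub {G H : SimpleGraph V} {k : ℕ} (h : IsTrussSub G H k)
    (A : Set (Sym2 V)) : IsATrussSub G H A k :=
  ⟨h.1, fun f hf => Or.inr (h.2 f hf)⟩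

lemma IsATrussSub.mono {G H : SimpleGraph V} {A : Set (Sym2 V)} {k k' : ℕ}
    (h : IsATrussSub G H A k) (hk : k' ≤ k) : IsATrussSub G H A k' :=
  ⟨h.1, fun f hf => (h.2 f hf).imp_right (le_trans (by omega))⟩

lemma IsATrussSub.le_atrussGraph {G H : SimpleGraph V} {A : Set (Sym2 V)} {k : ℕ}
    (h : IsATrussSub G H A k) : H ≤ atrussGraph G A k :=
  le_sSup h

lemma isATrussSub_atrussGraph (G : SimpleGraph V) (A : Set (Sym2 V)) (k : ℕ) :
    IsATrussSub G (atrussGraph G A k) A k := by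
  refine ⟨sSup_le fun H hH => hH.1, fun f hf => ?_⟩
  induction f using Sym2.inductionOn with
  | hf u v =>
    obtain ⟨H, hH, hadj⟩ := SimpleGraph.sSup_adj.1 hf
    exact (hH.2 s(u, v) hadj).imp_right (le_trans · (esupp_mono hH.le_atrussGraph _))

lemma bddAbove_atruss {G : SimpleGraph V} {A : Set (Sym2 V)} {e : Sym2 V} (he : e ∉ A) :
    BddAbove {k | ∃ H, IsATrussSub G H A k ∧ e ∈ H.edgeSet} := by
  refine ⟨Fintype.card V + 2, ?_⟩
  rintro k ⟨H, hH, heH⟩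
  have := ((hH.2 e heH).resolve_left he).trans (esupp_le_card H e)
  omega

lemma etruss_le_atruss {G : SimpleGraph V} {A : Set (Sym2 V)} {e : Sym2 V} (he : e ∉ A) :
    etruss G e ≤ atruss G A e :=
  csSup_le_csSup' (bddAbove_atruss he)
    fun _ ⟨H, hH, heH⟩ => ⟨H, hH.isATrussSub A, heH⟩

/-- A non-anchored edge of anchored trussness `> k` would lie in the anchored `(k+1)`-truss
with support at least `k - 1` there. -/
lemma atruss_le_of_esupp_atrussGraph_lt {G : SimpleGraph V} {A : Set (Sym2 V)} {e : Sym2 V}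
    (he : e ∉ A) {k : ℕ} (hlt : esupp (atrussGraph G A (k + 1)) e < k - 1) :
    atruss G A e ≤ k := by
  refine csSup_le' fun m ⟨H, hH, heH⟩ => ?_
  by_contra! hkm
  have heT : e ∈ (atrussGraph G A (k + 1)).edgeSet :=
    SimpleGraph.edgeSet_mono (hH.mono hkm).le_atrussGraph heH
  have := ((isATrussSub_atrussGraph G A (k + 1)).2 e heT).resolve_left he
  omega

end

theorem stmt15_general [Fintype V] (G : SimpleGraph V) (x e : Sym2 V)
    (hne : e ≠ x) (s : ℕ)
    (hub : esupp (atrussGraph G {x} (etruss G e + 1)) e ≤ s)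
    (hs : s < etruss G e - 1) :
    atruss G {x} e = etruss G e := by
  have he : e ∉ ({x} : Set (Sym2 V)) := hne
  exact (atruss_le_of_esupp_atrussGraph_lt he (hub.trans_lt hs)).antisymm (etruss_le_atruss he)

theorem stmt15 [Fintype V] (G : SimpleGraph V) (x e : Sym2 V)
    (hx : x ∈ G.edgeSet) (he : e ∈ G.edgeSet) (hne : e ≠ x) (s : ℕ)
    (hub : esupp (atrussGraph G {x} (etruss G e + 1)) e ≤ s)
    (hs : s < etruss G e - 1) :
    atruss G {x} e = etruss G e :=
  stmt15_general G x e hne s hub hs
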